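/- arXiv:2011.03639 — 6 statements merged into one kernel-verified Lean document; each statement's English description precedes it below -/
import Mathlib

section
/- Let x, y : V → [k] be labelings of a finite graph G=(V,E) with nonnegative edge weights w. For α ∈ [k] let x^α be the expansion of x towards y (x^α(u) = α if y(u) = α, else x^α(u) = x(u)). Let E_z denote the set of edges cut by labeling z. Then Σ_{α∈[k]} Σ_{(u,v) ∈ E_x \ E_{x^α}} w(u,v) ≥ Σ_{(u,v) ∈ E_x \ E_y} w(u,v). -/
open Finset

noncomputable def pottsEnergy {V : Type*} [Fintype V] {k : ℕ}
    (Edges : Finset (V × V)) (θ : V → Fin k → ℝ) (w : V × V → ℝ) (x : V → Fin k) : ℝ :=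
  ∑ u, θ u (x u) + ∑ e ∈ Edges, w e * (if x e.1 ≠ x e.2 then 1 else 0)

noncomputable def perturbW {V : Type*} {k : ℕ} (w : V × V → ℝ) (x : V → Fin k) :
    V × V → ℝ :=
  fun e => if x e.1 ≠ x e.2 then w e else 2 * w e

/-- `x` is an `α`-expansion of `x`. -/
def IsExpansion {V : Type*} {k : ℕ} (α : Fin k) (x x : V → Fin k) : Prop :=
  ∀ u, (x u = α → x u = α) ∧ (x u ≠ α → x u = x u)

/-- The expansion of `x` towards `y` with label `α`. -/
def expansionToward {V : Type*} {k : ℕ} [DecidableEq (Fin k)]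
    (x y : V → Fin k) (α : Fin k) : V → Fin k :=
  fun u => if y u = α then α else x u

/-- The set of edges cut by a labeling `z`. -/
def cutEdges {V : Type*} [DecidableEq V] {k : ℕ}
    (Edges : Finset (V × V)) (z : V → Fin k) : Finset (V × V) :=
  Edges.filter (fun e => z e.1 ≠ z e.2)

/-! Splitting `E_x \ E_y` according to the common `y`-label `α` of the endpoints, the part with
label `α` lies in `E_x \ E_{x^α}`, since `x^α` labels both of its endpoints `α`. Summing over `α`
with nonnegative weights gives the inequality. -/

theorem expansionToward_eq_of_eq {V : Type*} {k : ℕ} {x y : V → Fin k} {α : Fin k} {u : V}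
    (hu : y u = α) : expansionToward x y α u = α :=
  if_pos hu

section

variable {V : Type*} [DecidableEq V] {k : ℕ} {Edges : Finset (V × V)}

theorem mem_cutEdges {z : V → Fin k} {e : V × V} :
    e ∈ cutEdges Edges z ↔ e ∈ Edges ∧ z e.1 ≠ z e.2 :=
  Finset.mem_filter

theorem filter_sdiff_cutEdges_subset (x y : V → Fin k) (α : Fin k) :
    (cutEdges Edges x \ cutEdges Edges y).filter (fun e => y e.1 = α) ⊆
      cutEdges Edges x \ cutEdges Edges (expansionToward x y α) := by
  intro e he
  rw [Finset.mem_filter, Finset.mem_sdiff] at he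
  obtain ⟨⟨hex, hey⟩, hα⟩ := he
  have hE : e ∈ Edges := (mem_cutEdges.1 hex).1
  have hy : y e.1 = y e.2 := by simpa [mem_cutEdges, hE] using hey
  refine Finset.mem_sdiff.2 ⟨hex, fun hcut => (mem_cutEdges.1 hcut).2 ?_⟩
  rw [expansionToward_eq_of_eq hα, expansionToward_eq_of_eq (hy ▸ hα)]

end

theorem stmt3_general {V : Type*} [DecidableEq V] {k : ℕ}
    (Edges : Finset (V × V)) (w : V × V → ℝ) (hw : ∀ e ∈ Edges, 0 ≤ w e)
    (x y : V → Fin k) :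
    ∑ α : Fin k, ∑ e ∈ cutEdges Edges x \ cutEdges Edges (expansionToward x y α), w e ≥
      ∑ e ∈ cutEdges Edges x \ cutEdges Edges y, w e := by
  rw [ge_iff_le, ← Finset.sum_fiberwise (cutEdges Edges x \ cutEdges Edges y) (fun e => y e.1) w]
  refine Finset.sum_le_sum fun α _ => Finset.sum_le_sum_of_subset_of_nonneg
    (filter_sdiff_cutEdges_subset x y α) fun e he _ => hw e ?_
  exact (mem_cutEdges.1 (Finset.mem_sdiff.1 he).1).1

theorem stmt3 {V : Type*} [Fintype V] [DecidableEq V] {k : ℕ}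
    (Edges : Finset (V × V)) (w : V × V → ℝ) (hw : ∀ e ∈ Edges, 0 ≤ w e)
    (x y : V → Fin k) :
    ∑ α : Fin k, ∑ e ∈ cutEdges Edges x \ cutEdges Edges (expansionToward x y α), w e ≥
      ∑ e ∈ cutEdges Edges x \ cutEdges Edges y, w e :=
  stmt3_general Edges w hw x y
end

section
/- Let x, y : V → [k] be labelings of a finite graph G=(V,E) with nonnegative weights w and node costs θ_u. Define w^x(u,v) = w(u,v) if x(u)≠x(v), else 2·w(u,v), and for each α ∈ [k] let x^α be the expansion of x towards y. Then Σ_{α∈[k]} (E_w(x) − E_w(x^α)) ≥ E_{w^x}(x) − E_{w^x}(y), where E_w(z) = Σ_u θ_u(z(u)) + Σ_{uv∈E} w(u,v)·𝟙[z(u)≠z(v)]. Consequently, if E_{w^x}(y) < E_{w^x}(x), then some α-expansion x^α of x satisfies E_w(x^α) < E_w(x). -/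
open Finset

/-!
Compare the two sides of the inequality node by node and edge by edge. At a node `u` only the
expansion with `α = y u` moves the label, and it moves it to `y u`, so the node costs telescope
exactly to `θ_u(x u) - θ_u(y u)`. At an edge `(u, v)` only the expansions with `α = y u` and
`α = y v` can change whether the edge is cut; a case analysis on which of `x u = x v` and
`y u = y v` hold shows that these (at most two) expansions decrease the number of cuts by at
least `w^x(u,v)/w(u,v) ∈ {1, 2}` times the decrease from `x` to `y`. Summing gives the
inequality, and a positive sum has a positive term.
-/

section Labels

variable {L : Type*} [Fintype L] [DecidableEq L]

theorem sum_sub_apply_expand {M : Type*} [AddCommGroup M] (f : L → M) (a c : L) :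
    ∑ α, (f a - f (if c = α then α else a)) = f a - f c := by
  rw [Fintype.sum_eq_single c fun α hα => by simp [Ne.symm hα]]
  simp

theorem mul_sub_cut_le_sum_sub_cut_expand (a b c d : L) :
    (if a ≠ b then (1 : ℝ) else 2) * ((if a ≠ b then 1 else 0) - (if c ≠ d then 1 else 0)) ≤
      ∑ α, ((if a ≠ b then (1 : ℝ) else 0) -
        (if (if c = α then α else a) ≠ (if d = α then α else b) then 1 else 0)) := by
  by_cases hcd : c = d
  · subst hcd
    rw [Fintype.sum_eq_single c fun α hα => by simp [Ne.symm hα]]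
    by_cases hab : a = b <;> simp [hab]
  · rw [Fintype.sum_eq_add c d hcd fun α hα => by simp [Ne.symm hα.1, Ne.symm hα.2]]
    simp only [if_neg hcd, if_neg (Ne.symm hcd)]
    split_ifs <;> norm_num

end Labels

section Energy

variable {V : Type*} [Fintype V] {k : ℕ} (Edges : Finset (V × V)) (θ : V → Fin k → ℝ)

theorem pottsEnergy_sub_pottsEnergy (w : V × V → ℝ) (z z' : V → Fin k) :
    pottsEnergy Edges θ w z - pottsEnergy Edges θ w z' =
      ∑ u, (θ u (z u) - θ u (z' u)) +
        ∑ e ∈ Edges, w e * ((if z e.1 ≠ z e.2 then 1 else 0) -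
          (if z' e.1 ≠ z' e.2 then 1 else 0)) := by
  simp only [pottsEnergy, sum_sub_distrib, mul_sub]
  ring

theorem pottsEnergy_perturbW_sub_le_sum_sub_expansionToward {w : V × V → ℝ}
    (hw : ∀ e ∈ Edges, 0 ≤ w e) (x y : V → Fin k) :
    pottsEnergy Edges θ (perturbW w x) x - pottsEnergy Edges θ (perturbW w x) y ≤
      ∑ α, (pottsEnergy Edges θ w x - pottsEnergy Edges θ w (expansionToward x y α)) := by
  simp only [pottsEnergy_sub_pottsEnergy, sum_add_distrib]
  rw [sum_comm (s := univ), sum_comm (s := univ) (t := Edges)]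
  simp only [expansionToward, sum_sub_apply_expand, ← mul_sum]
  refine add_le_add le_rfl (sum_le_sum fun e he => ?_)
  calc perturbW w x e * ((if x e.1 ≠ x e.2 then 1 else 0) - (if y e.1 ≠ y e.2 then 1 else 0))
      = w e * ((if x e.1 ≠ x e.2 then (1 : ℝ) else 2) *
          ((if x e.1 ≠ x e.2 then 1 else 0) - (if y e.1 ≠ y e.2 then 1 else 0))) := by
        simp only [perturbW]
        split_ifs <;> ring
    _ ≤ _ := mul_le_mul_of_nonneg_left
        (mul_sub_cut_le_sum_sub_cut_expand (x e.1) (x e.2) (y e.1) (y e.2)) (hw e he)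

end Energy

theorem stmt5 {V : Type*} [Fintype V] {k : ℕ}
    (Edges : Finset (V × V)) (θ : V → Fin k → ℝ) (w : V × V → ℝ)
    (hw : ∀ e ∈ Edges, 0 ≤ w e) (x y : V → Fin k) :
    (∑ α : Fin k,
        (pottsEnergy Edges θ w x - pottsEnergy Edges θ w (expansionToward x y α)) ≥
      pottsEnergy Edges θ (perturbW w x) x - pottsEnergy Edges θ (perturbW w x) y) ∧
    (pottsEnergy Edges θ (perturbW w x) y < pottsEnergy Edges θ (perturbW w x) x →
      ∃ α : Fin k,
        pottsEnergy Edges θ w (expansionToward x y α) < pottsEnergy Edges θ w x) := by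
  have key := pottsEnergy_perturbW_sub_le_sum_sub_expansionToward Edges θ hw x y
  refine ⟨key, fun hlt => ?_⟩
  have hpos : ∑ _α : Fin k, (0 : ℝ) <
      ∑ α, (pottsEnergy Edges θ w x - pottsEnergy Edges θ w (expansionToward x y α)) := by
    rw [sum_const_zero]
    linarith
  obtain ⟨α, -, hα⟩ := exists_lt_of_sum_lt hpos
  exact ⟨α, sub_pos.mp hα⟩
end

section
/- Let x : V → [k] be a labeling and let x' : V → Δ_k assign to each vertex u a probability vector x'_u over [k] with x'_u(i) ≤ ε < 1/k for all i ≠ x(u). Apply the rounding: choose α ∈ [k] uniformly at random and r ∈ (0, 1/k) uniformly at random, independently; set x^α(u) = α if x'_u(α) > r and x^α(u) = x(u) otherwise. Then for every vertex u and every label i ∈ [k], ℙ[x^α(u) = i] = x'_u(i). -/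
/-!
For a label `i ≠ x u` the rounding outputs `i` exactly when `α = i` and `r < x'_u(i)`; as
`x'_u(i) ≤ ε < 1/k`, this event has probability `(1/k) · k · x'_u(i) = x'_u(i)`. The label `x u`
follows by complementation: the fibres of the rounded label partition a probability space and
`∑ i, x'_u(i) = 1`.
-/

open Finset MeasureTheory

/-- The joint law of the rounding randomness: a uniform label `α ∈ [k]` and an
independent uniform threshold `r ∈ (0, 1/k)`. -/
noncomputable def roundMeasure (k : ℕ) [NeZero k] : Measure (Fin k × ℝ) :=
  ((PMF.uniformOfFintype (Fin k)).toMeasure).prod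
    ((k : ENNReal) • volume.restrict (Set.Ioo (0 : ℝ) (1 / k)))

/-- The label assigned to vertex `u` by the rounding with randomness `p = (α, r)`:
`α` if `xp_u(α) > r`, else `x(u)`. -/
noncomputable def roundLabel {V : Type*} {k : ℕ} (x : V → Fin k) (xp : V → Fin k → ℝ)
    (p : Fin k × ℝ) (u : V) : Fin k :=
  if p.2 < xp u p.1 then p.1 else x u

lemma volume_restrict_Ioo_Iio {a b c : ℝ} (hc : c ≤ b) :
    volume.restrict (Set.Ioo a b) (Set.Iio c) = ENNReal.ofReal (c - a) := by
  rw [Measure.restrict_apply measurableSet_Iio, Set.Iio_inter_Ioo, min_eq_left hc,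
    Real.volume_Ioo]

instance isProbabilityMeasure_roundMeasure (k : ℕ) [NeZero k] :
    IsProbabilityMeasure (roundMeasure k) := by
  have : IsProbabilityMeasure ((k : ENNReal) • volume.restrict (Set.Ioo (0 : ℝ) (1 / k))) := by
    constructor
    rw [Measure.smul_apply, Measure.restrict_apply_univ, Real.volume_Ioo, sub_zero, smul_eq_mul,
      ENNReal.ofReal_div_of_pos (by simp [Nat.pos_of_neZero k]), ENNReal.ofReal_one,
      ENNReal.ofReal_natCast, ENNReal.mul_div_cancel (by simp [NeZero.ne k]) (by simp)]
  unfold roundMeasure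
  infer_instance

lemma roundMeasure_singleton_prod_Iio {k : ℕ} [NeZero k] (a : Fin k) {c : ℝ} (hc : c ≤ 1 / k) :
    roundMeasure k ({a} ×ˢ Set.Iio c) = ENNReal.ofReal c := by
  rw [roundMeasure, Measure.prod_prod,
    PMF.toMeasure_apply_singleton _ _ (measurableSet_singleton a), PMF.uniformOfFintype_apply,
    Measure.smul_apply, volume_restrict_Ioo_Iio hc, sub_zero, smul_eq_mul, Fintype.card_fin,
    ← mul_assoc, ENNReal.inv_mul_cancel (by simp [NeZero.ne k]) (by simp), one_mul]

lemma measurable_roundLabel {V : Type*} {k : ℕ} (x : V → Fin k) (xp : V → Fin k → ℝ) (u : V) :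
    Measurable fun p => roundLabel x xp p u :=
  Measurable.ite (measurableSet_lt measurable_snd ((measurable_of_countable _).comp measurable_fst))
    measurable_fst measurable_const

lemma setOf_roundLabel_eq_of_ne {V : Type*} {k : ℕ} {x : V → Fin k} (xp : V → Fin k → ℝ) {u : V}
    {i : Fin k} (hi : i ≠ x u) :
    {p | roundLabel x xp p u = i} = {i} ×ˢ Set.Iio (xp u i) := by
  ext ⟨a, r⟩
  simp only [roundLabel, Set.mem_ofPred_eq, Set.mem_prod, Set.mem_singleton_iff, Set.mem_Iio]
  grind

lemma measure_preimage_singleton_eq_ofReal {Ω β : Type*} [MeasurableSpace Ω] [Fintype β]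
    [DecidableEq β] {μ : Measure Ω} [IsProbabilityMeasure μ] {f : Ω → β}
    (hf : ∀ b, MeasurableSet (f ⁻¹' {b})) {q : β → ℝ} (hq₀ : ∀ b, 0 ≤ q b) (hq : ∑ b, q b = 1)
    {b₀ : β} (hne : ∀ b, b ≠ b₀ → μ (f ⁻¹' {b}) = ENNReal.ofReal (q b)) :
    μ (f ⁻¹' {b₀}) = ENNReal.ofReal (q b₀) := by
  have htotal : ∑ b, μ (f ⁻¹' {b}) = ∑ b, ENNReal.ofReal (q b) := by
    rw [sum_measure_preimage_singleton _ fun b _ => hf b, Finset.coe_univ, Set.preimage_univ,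
      measure_univ, ← ENNReal.ofReal_sum_of_nonneg fun b _ => hq₀ b, hq, ENNReal.ofReal_one]
  rw [← Finset.add_sum_erase _ _ (Finset.mem_univ b₀),
    ← Finset.add_sum_erase _ _ (Finset.mem_univ b₀),
    Finset.sum_congr rfl fun b hb => hne b (Finset.ne_of_mem_erase hb)] at htotal
  exact (ENNReal.add_left_inj (ENNReal.sum_ne_top.2 fun _ _ => ENNReal.ofReal_ne_top)).1 htotal

/-- Rounding guarantee: each vertex gets label `i` with probability exactly `x'_u(i)`. -/
theorem stmt8 {V : Type*} {k : ℕ} [NeZero k] (ε : ℝ) (hε : ε < 1 / k)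
    (x : V → Fin k) (x' : V → Fin k → ℝ)
    (hnn : ∀ u i, 0 ≤ x' u i) (hsum : ∀ u, ∑ i, x' u i = 1)
    (hsmall : ∀ u i, i ≠ x u → x' u i ≤ ε)
    (u : V) (i : Fin k) :
    roundMeasure k {p : Fin k × ℝ | roundLabel x x' p u = i} =
      ENNReal.ofReal (x' u i) := by
  have hne : ∀ j, j ≠ x u →
      roundMeasure k {p | roundLabel x x' p u = j} = ENNReal.ofReal (x' u j) := fun j hj => by
    rw [setOf_roundLabel_eq_of_ne x' hj]
    exact roundMeasure_singleton_prod_Iio j ((hsmall u j hj).trans hε.le)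
  by_cases hi : i = x u
  · subst hi
    classical
    exact measure_preimage_singleton_eq_ofReal
      (fun j => measurable_roundLabel x x' u (measurableSet_singleton j)) (hnn u) (hsum u) hne
  · exact hne i hi
end

section
/- Under the rounding of the previous statement (choose α ∈ [k] and r ∈ (0,1/k) uniformly and independently, set x^α(u)=α if x'_u(α) > r, else x^α(u)=x(u)), for any edge (u,v) with x(u) = x(v): ℙ[x^α(u) ≠ x^α(v)] ≤ Σ_{i≠x(u)} |x'_u(i) − x'_v(i)| ≤ 2·d(u,v), where d(u,v) = (1/2)·Σ_{i=1}^k |x'_u(i) − x'_v(i)|. -/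
open Finset MeasureTheory

/-
The two endpoints of an edge with `x u = x v` can only be separated when the sampled label `α`
is not `x u` and exactly one of them adopts it, i.e. the threshold `r` lies between `x'_u(α)`
and `x'_v(α)`. For a fixed `α` this has probability at most
`(1/k) · k · |x'_u(α) - x'_v(α)|`, and a union bound over `α ≠ x u` finishes.
-/

section Rounding

variable {V : Type*} {k : ℕ}

lemma ne_and_mem_uIcc_of_roundLabel_ne {x : V → Fin k} {xp : V → Fin k → ℝ} {u v : V}
    (huv : x u = x v) {p : Fin k × ℝ} (h : roundLabel x xp p u ≠ roundLabel x xp p v) :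
    p.1 ≠ x u ∧ p.2 ∈ Set.uIcc (xp u p.1) (xp v p.1) := by
  unfold roundLabel at h
  split_ifs at h with hu hv hv
  · exact absurd rfl h
  · exact ⟨fun h1 => h (h1.trans huv), Set.mem_uIcc.2 (.inr ⟨not_lt.1 hv, hu.le⟩)⟩
  · exact ⟨fun h1 => h h1.symm, Set.mem_uIcc.2 (.inl ⟨not_lt.1 hu, hv.le⟩)⟩
  · exact absurd huv h

lemma setOf_roundLabel_ne_subset {x : V → Fin k} (xp : V → Fin k → ℝ) {u v : V}
    (huv : x u = x v) :
    {p | roundLabel x xp p u ≠ roundLabel x xp p v} ⊆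
      ⋃ α ∈ univ.filter (· ≠ x u), ({α} : Set (Fin k)) ×ˢ Set.uIcc (xp u α) (xp v α) := by
  rintro ⟨α, r⟩ hp
  obtain ⟨hα, hr⟩ := ne_and_mem_uIcc_of_roundLabel_ne huv hp
  exact Set.mem_biUnion (by simpa using hα) ⟨rfl, hr⟩

lemma roundMeasure_singleton_prod_le [NeZero k] (α : Fin k) (s : Set ℝ) :
    roundMeasure k ({α} ×ˢ s) ≤ volume s := by
  have hk : (k : ENNReal) ≠ 0 := Nat.cast_ne_zero.2 (NeZero.ne k)
  rw [roundMeasure, Measure.prod_prod,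
    PMF.toMeasure_apply_singleton _ _ (measurableSet_singleton α), PMF.uniformOfFintype_apply,
    Fintype.card_fin, Measure.smul_apply, smul_eq_mul, ← mul_assoc,
    ENNReal.inv_mul_cancel hk (ENNReal.natCast_ne_top k), one_mul]
  exact Measure.restrict_apply_le _ _

end Rounding

theorem stmt9_general {V : Type*} {k : ℕ} [NeZero k]
    (x : V → Fin k) (x' : V → Fin k → ℝ)
    (u v : V) (huv : x u = x v) :
    roundMeasure k {p : Fin k × ℝ | roundLabel x x' p u ≠ roundLabel x x' p v} ≤
      ENNReal.ofReal (∑ i ∈ univ.filter (· ≠ x u), |x' u i - x' v i|) ∧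
    (∑ i ∈ univ.filter (· ≠ x u), |x' u i - x' v i|) ≤
      2 * ((1 / 2) * ∑ i, |x' u i - x' v i|) := by
  refine ⟨?_, ?_⟩
  · calc roundMeasure k {p | roundLabel x x' p u ≠ roundLabel x x' p v}
        ≤ ∑ α ∈ univ.filter (· ≠ x u),
            roundMeasure k (({α} : Set (Fin k)) ×ˢ Set.uIcc (x' u α) (x' v α)) :=
          (measure_mono (setOf_roundLabel_ne_subset x' huv)).trans
            (measure_biUnion_finset_le _ _)
      _ ≤ ∑ α ∈ univ.filter (· ≠ x u), ENNReal.ofReal |x' u α - x' v α| := by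
          gcongr with α
          refine (roundMeasure_singleton_prod_le α _).trans_eq ?_
          rw [Real.volume_interval, abs_sub_comm]
      _ = ENNReal.ofReal (∑ i ∈ univ.filter (· ≠ x u), |x' u i - x' v i|) :=
          (ENNReal.ofReal_sum_of_nonneg fun i _ => abs_nonneg _).symm
  · rw [← mul_assoc, mul_one_div_cancel two_ne_zero, one_mul]
    exact sum_le_sum_of_subset_of_nonneg (filter_subset _ _) fun i _ _ => abs_nonneg _

/-- For an edge not cut by `x`, the rounding cuts it with probability at most
`∑_{i ≠ x(u)} |x'_u(i) − x'_v(i)| ≤ 2 d(u,v)`. -/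
theorem stmt9 {V : Type*} {k : ℕ} [NeZero k] (ε : ℝ) (hε : ε < 1 / k)
    (x : V → Fin k) (x' : V → Fin k → ℝ)
    (hnn : ∀ u i, 0 ≤ x' u i) (hsum : ∀ u, ∑ i, x' u i = 1)
    (hsmall : ∀ u i, i ≠ x u → x' u i ≤ ε)
    (u v : V) (huv : x u = x v) :
    roundMeasure k {p : Fin k × ℝ | roundLabel x x' p u ≠ roundLabel x x' p v} ≤
      ENNReal.ofReal (∑ i ∈ univ.filter (· ≠ x u), |x' u i - x' v i|) ∧
    (∑ i ∈ univ.filter (· ≠ x u), |x' u i - x' v i|) ≤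
      2 * ((1 / 2) * ∑ i, |x' u i - x' v i|) :=
  stmt9_general x x' u v huv
end

section
/- Let x be a labeling that is a global minimum of the Potts energy with perturbed weights w^x (where w^x(u,v) = w(u,v) if x(u)≠x(v), else 2·w(u,v)), and let x* be a global minimum of the Potts energy with original weights w. Then E_w(x) ≤ E_w(x*) + Σ_{(u,v)∈E} w(u,v)·𝟙[x*(u) ≠ x*(v)]; in particular, if all node costs and weights are nonnegative, E_w(x) ≤ 2·E_w(x*). -/
open Finset

/-!
Doubling the weights of the edges that `x` leaves uncut does not change the energy of `x`, and
it at most doubles the pairwise part of the energy of any other labeling `y`. Hence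
`E_w(x) = E_{w^x}(x) ≤ E_{w^x}(y) ≤ E_w(y) + (pairwise part of E_w(y))`, and with nonnegative
node costs the pairwise part is at most `E_w(y)`.
-/

theorem perturbW_le_two_mul {V : Type*} {k : ℕ} (w : V × V → ℝ) (x : V → Fin k) {e : V × V}
    (he : 0 ≤ w e) : perturbW w x e ≤ 2 * w e := by
  unfold perturbW
  split_ifs <;> linarith

section Potts

variable {V : Type*} [Fintype V] {k : ℕ}
  (Edges : Finset (V × V)) (θ : V → Fin k → ℝ) (w : V × V → ℝ)

theorem pottsEnergy_perturbW_self (x : V → Fin k) :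
    pottsEnergy Edges θ (perturbW w x) x = pottsEnergy Edges θ w x := by
  unfold pottsEnergy perturbW
  congr 1
  refine sum_congr rfl fun e _ => ?_
  by_cases h : x e.1 ≠ x e.2 <;> simp [h]

theorem pottsEnergy_perturbW_le (hw : ∀ e ∈ Edges, 0 ≤ w e) (x y : V → Fin k) :
    pottsEnergy Edges θ (perturbW w x) y ≤
      pottsEnergy Edges θ w y + ∑ e ∈ Edges, w e * (if y e.1 ≠ y e.2 then 1 else 0) := by
  unfold pottsEnergy
  rw [add_assoc, ← sum_add_distrib]
  gcongr with e he
  rw [← two_mul, ← mul_assoc]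
  exact mul_le_mul_of_nonneg_right (perturbW_le_two_mul w x (hw e he)) (by positivity)

theorem sum_cut_le_pottsEnergy (hθ : ∀ u i, 0 ≤ θ u i) (y : V → Fin k) :
    ∑ e ∈ Edges, w e * (if y e.1 ≠ y e.2 then 1 else 0) ≤ pottsEnergy Edges θ w y :=
  le_add_of_nonneg_left (sum_nonneg fun u _ => hθ u _)

end Potts

theorem stmt13_general {V : Type*} [Fintype V] {k : ℕ}
    (Edges : Finset (V × V)) (θ : V → Fin k → ℝ) (w : V × V → ℝ)
    (hθ : ∀ u i, 0 ≤ θ u i) (hw : ∀ e ∈ Edges, 0 ≤ w e)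
    (x xstar : V → Fin k)
    (hx : ∀ y : V → Fin k,
      pottsEnergy Edges θ (perturbW w x) x ≤ pottsEnergy Edges θ (perturbW w x) y) :
    pottsEnergy Edges θ w x ≤
      pottsEnergy Edges θ w xstar +
        ∑ e ∈ Edges, w e * (if xstar e.1 ≠ xstar e.2 then 1 else 0) ∧
    pottsEnergy Edges θ w x ≤ 2 * pottsEnergy Edges θ w xstar := by
  have hbound : pottsEnergy Edges θ w x ≤
      pottsEnergy Edges θ w xstar +
        ∑ e ∈ Edges, w e * (if xstar e.1 ≠ xstar e.2 then 1 else 0) :=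
    calc pottsEnergy Edges θ w x = pottsEnergy Edges θ (perturbW w x) x :=
          (pottsEnergy_perturbW_self Edges θ w x).symm
      _ ≤ pottsEnergy Edges θ (perturbW w x) xstar := hx xstar
      _ ≤ _ := pottsEnergy_perturbW_le Edges θ w hw x xstar
  refine ⟨hbound, ?_⟩
  linarith [sum_cut_le_pottsEnergy Edges θ w hθ xstar]

/-- A global minimum of the perturbed instance satisfies the 2-approximation bound. -/
theorem stmt13 {V : Type*} [Fintype V] {k : ℕ}
    (Edges : Finset (V × V)) (θ : V → Fin k → ℝ) (w : V × V → ℝ)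
    (hθ : ∀ u i, 0 ≤ θ u i) (hw : ∀ e ∈ Edges, 0 ≤ w e)
    (x xstar : V → Fin k)
    (hx : ∀ y : V → Fin k,
      pottsEnergy Edges θ (perturbW w x) x ≤ pottsEnergy Edges θ (perturbW w x) y)
    (hxstar : ∀ y : V → Fin k, pottsEnergy Edges θ w xstar ≤ pottsEnergy Edges θ w y) :
    pottsEnergy Edges θ w x ≤
      pottsEnergy Edges θ w xstar +
        ∑ e ∈ Edges, w e * (if xstar e.1 ≠ xstar e.2 then 1 else 0) ∧
    pottsEnergy Edges θ w x ≤ 2 * pottsEnergy Edges θ w xstar :=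
  stmt13_general Edges θ w hθ hw x xstar hx
end

section
/- There exists a Potts model instance where the converse of the previous statement fails: a labeling x satisfying the 2-approximation bound E_w(x) ≤ E_w(x*) + Σ_{uv} w(u,v)·𝟙[x*(u)≠x*(v)] that is not a global minimum of the perturbed instance with weights w^x. Concretely: take V = {s,t}, one edge (s,t) with w = 1, k = 4 labels, 0 < ε < 1/2, node costs θ_s = (0, ε, M, M) and θ_t = (M, M, ε, 0) for sufficiently large M (e.g., M > 2). The labeling x = (s↦1, t↦2) has energy 1+2ε ≤ 2 = E_w(x*) + (cut cost of x*), where x* = (s↦0, t↦3) is the unique MAP solution with energy 1, yet x is not optimal for weights w^x = w. -/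
open Finset

/-- Two-node Potts instance: vertices `s = true`, `t = false`, one edge `(s,t)` of
weight `1`, four labels. -/
noncomputable def exEnergy (ε M : ℝ) (z : Bool → Fin 4) : ℝ :=
  (![0, ε, M, M] : Fin 4 → ℝ) (z true) + (![M, M, ε, 0] : Fin 4 → ℝ) (z false) +
    (if z true ≠ z false then 1 else 0)

theorem exEnergy_cut_labeling (ε M : ℝ) :
    exEnergy ε M (fun b => if b then 1 else 2) = 1 + 2 * ε := by
  simp [exEnergy]
  ring

theorem exEnergy_map_labeling (ε M : ℝ) :
    exEnergy ε M (fun b => if b then 0 else 3) = 1 := by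
  simp [exEnergy]

/-- A labeling that cuts the edge and differs from `s ↦ 0, t ↦ 3` pays at least `ε` at some
node on top of the cut; one that does not cut pays `M` at some node. -/
theorem one_lt_exEnergy {ε M : ℝ} (hε : 0 < ε) (hM : 1 < M) {z : Bool → Fin 4}
    (hz : z ≠ fun b => if b then 0 else 3) : 1 < exEnergy ε M z := by
  have hz' : ¬(z true = 0 ∧ z false = 3) := fun h =>
    hz (funext fun b => by cases b <;> simp [h.1, h.2])
  unfold exEnergy
  generalize z true = a, z false = b at hz' ⊢
  fin_cases a <;> fin_cases b <;> simp at hz' ⊢ <;> linarith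

/-- Counterexample to the converse of the 2-approximation bound: the labeling
`x = (s↦1, t↦2)` satisfies the 2-approximation bound relative to the unique MAP
solution `x* = (s↦0, t↦3)` of energy `1`, yet (since `x` cuts the only edge, so the
perturbed weights coincide with the original ones) `x` is not a global minimum of the
perturbed instance. -/
theorem stmt14 (ε M : ℝ) (hε0 : 0 < ε) (hε : ε < 1 / 2) (hM : 2 < M) :
    let x : Bool → Fin 4 := fun b => if b then 1 else 2
    let xstar : Bool → Fin 4 := fun b => if b then 0 else 3
    -- x cuts the only edge, so the perturbed instance has the same energy function
    (x true ≠ x false) ∧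
    -- x satisfies the 2-approximation bound E(x) ≤ E(x*) + cut cost of x*
    exEnergy ε M x = 1 + 2 * ε ∧
    exEnergy ε M x ≤ exEnergy ε M xstar + (if xstar true ≠ xstar false then 1 else 0) ∧
    -- x* is the unique MAP solution, with energy 1
    exEnergy ε M xstar = 1 ∧
    (∀ z : Bool → Fin 4, z ≠ xstar → exEnergy ε M xstar < exEnergy ε M z) ∧
    -- x is not optimal in the perturbed instance (whose energy equals exEnergy)
    (∃ y : Bool → Fin 4, exEnergy ε M y < exEnergy ε M x) := by
  intro x xstar
  have hx : exEnergy ε M x = 1 + 2 * ε := exEnergy_cut_labeling ε M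
  have hxstar : exEnergy ε M xstar = 1 := exEnergy_map_labeling ε M
  refine ⟨by decide, hx, ?_, hxstar, ?_, xstar, ?_⟩
  · rw [hx, hxstar, if_pos (by decide)]
    linarith
  · intro z hz
    rw [hxstar]
    exact one_lt_exEnergy hε0 (by linarith) hz
  · linarith
end
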